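/- For independent observations X₁,...,X_d where exactly s have density f₁ and d - s have density f₀ (with respect to a common dominating measure), f₀ ≠ f₁, s < d, the selector η̂_j = 1{log(f₁(X_j)/f₀(X_j)) ≥ log(d/s - 1)} satisfies sup over labelings η of E|η̂ - η| = s·Ψ, where Ψ = P₁(log(f₁/f₀)(X) < log(d/s - 1)) + (d/s - 1)·P₀(log(f₁/f₀)(X) ≥ log(d/s - 1)), and P_k denotes probability under density f_k. -/

import Mathlib

/-!
Under the labeling `η`, the loss of the threshold selector is the number of coordinates `j`
with `X_j` in the "wrong" half-space of the likelihood ratio: `{L < t}` if `η_j = 1` and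
`{t ≤ L}` if `η_j = 0`. Under the product measure each coordinate has its own marginal, so the
risk is `s · P₁(L < t) + (d - s) · P₀(t ≤ L)` for every labeling with `s` ones. It does not
depend on `η`, so the supremum is this common value, which equals `s · Ψ`.
-/

open MeasureTheory

lemma integral_pi_sum_indicator_eval {ι α : Type*} [Fintype ι] [MeasurableSpace α]
    (μ : ι → Measure α) [∀ i, IsProbabilityMeasure (μ i)] {S : ι → Set α} (hS : ∀ i, MeasurableSet (S i)) :
    ∫ x, ∑ i, (S i).indicator 1 (x i) ∂Measure.pi μ = ∑ i, (μ i).real (S i) := by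
  have hint (i : ι) : Integrable (fun x : ι → α => (S i).indicator 1 (x i)) (Measure.pi μ) :=
    integrable_comp_eval (μ := μ) ((integrable_const (1 : ℝ)).indicator (hS i))
  rw [integral_finsetSum _ fun i _ => hint i]
  refine Finset.sum_congr rfl fun i _ => ?_
  rw [integral_comp_eval (measurable_const.indicator (hS i)).aestronglyMeasurable,
    integral_indicator_one (hS i)]

section Labelings

variable {ι : Type*} [Fintype ι]

lemma exists_labeling_card_eq {s : ℕ} (hs : s ≤ Fintype.card ι) :
    ∃ η : ι → Bool, (Finset.univ.filter fun j => η j = true).card = s := by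
  classical
  obtain ⟨T, -, hT⟩ := Finset.exists_subset_card_eq (s := Finset.univ) hs
  exact ⟨fun j => decide (j ∈ T), by simpa using hT⟩

lemma sum_ite_labeling {η : ι → Bool} {s : ℕ}
    (hη : (Finset.univ.filter fun j => η j = true).card = s) (a b : ℝ) :
    ∑ j, (if η j then a else b) = s * a + (Fintype.card ι - s) * b := by
  have hsplit : ∀ j, (if η j then a else b) = b + (a - b) * (if η j = true then 1 else 0) :=
    fun j => by cases η j <;> simp
  simp_rw [hsplit, Finset.sum_add_distrib, ← Finset.mul_sum, Finset.sum_boole, hη]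
  simp only [Finset.sum_const, Finset.card_univ, nsmul_eq_mul]
  ring

end Labelings

lemma abs_ite_sub_ite_eq_indicator {α : Type*} (A : Set α) [DecidablePred (· ∈ A)]
    (b : Bool) (x : α) :
    |(if x ∈ A then (1 : ℝ) else 0) - (if b then 1 else 0)|
      = (if b then Aᶜ else A).indicator 1 x := by
  by_cases hx : x ∈ A <;> cases b <;> simp [hx]

lemma integral_hamming_indicator_selector {ι α : Type*} [Fintype ι] [MeasurableSpace α]
    (P₀ P₁ : Measure α) [IsProbabilityMeasure P₀] [IsProbabilityMeasure P₁]
    {A : Set α} [DecidablePred (· ∈ A)] (hA : MeasurableSet A)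
    {η : ι → Bool} {s : ℕ} (hη : (Finset.univ.filter fun j => η j = true).card = s) :
    ∫ x, ∑ j, |(if x j ∈ A then (1 : ℝ) else 0) - (if η j then 1 else 0)|
        ∂Measure.pi (fun j => if η j then P₁ else P₀)
      = s * P₁.real Aᶜ + (Fintype.card ι - s) * P₀.real A := by
  have : ∀ j, IsProbabilityMeasure (if η j then P₁ else P₀) := fun j => by
    split <;> infer_instance
  simp_rw [abs_ite_sub_ite_eq_indicator]
  rw [integral_pi_sum_indicator_eval _ fun j => by cases η j <;> simp [hA, hA.compl],
    ← sum_ite_labeling hη]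
  exact Finset.sum_congr rfl fun j _ => by cases η j <;> rfl

theorem two_density_selector_risk {𝒳 : Type*} [MeasurableSpace 𝒳]
    (ν : Measure 𝒳) (f₀ f₁ : 𝒳 → ENNReal)
    (hf₀ : Measurable f₀) (hf₁ : Measurable f₁)
    (hP₀ : IsProbabilityMeasure (ν.withDensity f₀))
    (hP₁ : IsProbabilityMeasure (ν.withDensity f₁))
    (d s : ℕ) (hs : 1 ≤ s) (hsd : s < d)
    -- log-likelihood ratio
    (L : 𝒳 → ℝ) (hL : L = fun x => Real.log ((f₁ x).toReal / (f₀ x).toReal))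
    -- risk value
    (Ψ : ℝ)
    (hΨ : Ψ = ((ν.withDensity f₁) {x | L x < Real.log ((d : ℝ) / s - 1)}).toReal
      + ((d : ℝ) / s - 1) *
        ((ν.withDensity f₀) {x | Real.log ((d : ℝ) / s - 1) ≤ L x}).toReal) :
    (⨆ η : {η : Fin d → Bool // (Finset.univ.filter fun j => η j = true).card = s},
      ∫ x : Fin d → 𝒳,
        (∑ j, |(if Real.log ((d : ℝ) / s - 1) ≤ L (x j) then (1 : ℝ) else 0)
          - (if (η : Fin d → Bool) j then (1 : ℝ) else 0)|)
        ∂(Measure.pi fun j => if (η : Fin d → Bool) j then ν.withDensity f₁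
            else ν.withDensity f₀))
      = s * Ψ := by
  set t := Real.log ((d : ℝ) / s - 1)
  have hL_meas : Measurable L :=
    hL ▸ Real.measurable_log.comp (hf₁.ennreal_toReal.div hf₀.ennreal_toReal)
  have hA : MeasurableSet {x | t ≤ L x} := measurableSet_le measurable_const hL_meas
  have hAc : {x | L x < t} = {x | t ≤ L x}ᶜ := by ext; simp
  have risk : ∀ η : {η : Fin d → Bool // (Finset.univ.filter fun j => η j = true).card = s},
      ∫ x : Fin d → 𝒳, (∑ j, |(if t ≤ L (x j) then (1 : ℝ) else 0)
          - (if (η : Fin d → Bool) j then (1 : ℝ) else 0)|)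
        ∂(Measure.pi fun j => if (η : Fin d → Bool) j then ν.withDensity f₁
            else ν.withDensity f₀)
      = s * (ν.withDensity f₁).real {x | L x < t}
          + (d - s) * (ν.withDensity f₀).real {x | t ≤ L x} := fun η => by
    rw [hAc]
    exact (integral_hamming_indicator_selector _ _ hA η.2).trans (by rw [Fintype.card_fin])
  obtain ⟨η₀, hη₀⟩ := exists_labeling_card_eq (ι := Fin d) (by simpa using hsd.le)
  have : Nonempty {η : Fin d → Bool // (Finset.univ.filter fun j => η j = true).card = s} :=
    ⟨⟨η₀, hη₀⟩⟩
  rw [iSup_congr risk, ciSup_const, hΨ]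
  have hs0 : (s : ℝ) ≠ 0 := by positivity
  simp only [measureReal_def]
  field_simp
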